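/- Let E and X be real Banach spaces with X infinite-dimensional. Then the relation ≼ on finite-rank bounded linear operators from E to X is upward directed: for every pair of finite-rank bounded operators S, T : E → X there exists a finite-rank bounded operator U : E → X such that S ≼ U and T ≼ U. -/

import Mathlib

/-- The order `T ≼ S` on finite-rank operators from the paper: there are `n ≤ m` and
linearly independent vectors `e₁, …, e_m` of `E` such that `span{e₁,…,eₙ}` is an
algebraic complement of `ker T`, `span{e₁,…,e_m}` is an algebraic complement of `ker S`,
and `T eᵢ = 0` for `n < i ≤ m`. -/
def OpOrder {E X : Type*} [NormedAddCommGroup E] [NormedSpace ℝ E]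
    [NormedAddCommGroup X] [NormedSpace ℝ X] (T S : E →L[ℝ] X) : Prop :=
  ∃ (n m : ℕ) (hnm : n ≤ m) (e : Fin m → E),
    LinearIndependent ℝ e ∧
    (Submodule.span ℝ (Set.range fun i : Fin n => e (Fin.castLE hnm i)) ⊓
        LinearMap.ker (T : E →ₗ[ℝ] X) = ⊥) ∧
    (Submodule.span ℝ (Set.range fun i : Fin n => e (Fin.castLE hnm i)) ⊔
        LinearMap.ker (T : E →ₗ[ℝ] X) = ⊤) ∧
    (Submodule.span ℝ (Set.range e) ⊓ LinearMap.ker (S : E →ₗ[ℝ] X) = ⊥) ∧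
    (Submodule.span ℝ (Set.range e) ⊔ LinearMap.ker (S : E →ₗ[ℝ] X) = ⊤) ∧
    ∀ i : Fin m, n ≤ (i : ℕ) → T (e i) = 0

/-!
If `ker U ≤ ker S` and `U` has finite rank, take a complement `C` of `ker S` and a complement `D`
of `ker U` inside `ker S`; by the modular law `C ⊔ D` complements `ker U`, so a basis of `C`
followed by a basis of `D` witnesses `S ≼ U`. It therefore suffices to find a finite-rank `U`
with `ker U = ker S ⊓ ker T`: compose `x ↦ (S x, T x)`, which lands in the finite-dimensional
space `range S × range T`, with an injective linear map of that space into the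
infinite-dimensional `X`.
-/

open Set Submodule

theorem IsCompl.exists_le_isCompl_sup {α : Type*} [Lattice α] [BoundedOrder α]
    [IsModularLattice α] [ComplementedLattice α] {a b c : α} (hab : IsCompl a b) (hcb : c ≤ b) :
    ∃ d ≤ b, IsCompl (a ⊔ d) c := by
  obtain ⟨d, hcd, rfl⟩ := IsModularLattice.exists_disjoint_and_sup_eq hcb
  exact ⟨d, le_sup_right, hcd.symm.isCompl_sup_left_of_isCompl_sup_right (sup_comm c d ▸ hab)⟩

theorem Fin.range_append {α : Type*} {m n : ℕ} (u : Fin m → α) (v : Fin n → α) :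
    range (Fin.append u v) = range u ∪ range v := by
  rw [← Set.Sum.elim_range, ← Fin.append_comp_sumElim]
  exact (finSumFinEquiv.surjective.range_comp _).symm

theorem LinearIndependent.fin_append {R M : Type*} [Ring R] [AddCommGroup M] [Module R M]
    {m n : ℕ} {u : Fin m → M} {v : Fin n → M} (hu : LinearIndependent R u)
    (hv : LinearIndependent R v) (huv : Disjoint (span R (range u)) (span R (range v))) :
    LinearIndependent R (Fin.append u v) := by
  rw [← linearIndependent_equiv finSumFinEquiv,
    show Fin.append u v ∘ finSumFinEquiv = Sum.elim u v from Fin.append_comp_sumElim]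
  exact hu.sum_type hv huv

theorem Submodule.exists_fin_linearIndependent_span_eq {K V : Type*} [DivisionRing K]
    [AddCommGroup V] [Module K V] (C : Submodule K V) [FiniteDimensional K C] :
    ∃ (n : ℕ) (b : Fin n → V), LinearIndependent K b ∧ span K (range b) = C := by
  let b := Module.finBasis K C
  refine ⟨_, C.subtype ∘ b, b.linearIndependent.map' C.subtype C.ker_subtype, ?_⟩
  rw [Set.range_comp, ← Submodule.map_span, b.span_eq, Submodule.map_top, Submodule.range_subtype]

theorem Submodule.exists_linearIndependent_isCompl_of_le {K V : Type*} [DivisionRing K]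
    [AddCommGroup V] [Module K V] {K₁ K₂ : Submodule K V} (hle : K₂ ≤ K₁)
    [FiniteDimensional K (V ⧸ K₂)] :
    ∃ (n m : ℕ) (hnm : n ≤ m) (e : Fin m → V), LinearIndependent K e ∧
      IsCompl (span K (range fun i : Fin n => e (Fin.castLE hnm i))) K₁ ∧
      IsCompl (span K (range e)) K₂ ∧ ∀ i : Fin m, n ≤ (i : ℕ) → e i ∈ K₁ := by
  obtain ⟨C, hC⟩ := K₁.exists_isCompl
  obtain ⟨D, hDK₁, hCD⟩ := hC.symm.exists_le_isCompl_sup hle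
  have : FiniteDimensional K ↥(C ⊔ D) := (quotientEquivOfIsCompl K₂ _ hCD.symm).finiteDimensional
  have : FiniteDimensional K C := finiteDimensional_of_le (le_sup_left : C ≤ C ⊔ D)
  have : FiniteDimensional K D := finiteDimensional_of_le (le_sup_right : D ≤ C ⊔ D)
  obtain ⟨n, b, hb, hbC⟩ := C.exists_fin_linearIndependent_span_eq
  obtain ⟨k, c, hc, hcD⟩ := D.exists_fin_linearIndependent_span_eq
  refine ⟨n, n + k, Nat.le_add_right n k, Fin.append b c, hb.fin_append hc ?_, ?_, ?_, ?_⟩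
  · rw [hbC, hcD]
    exact hC.symm.disjoint.mono_right hDK₁
  · simpa only [Fin.append_left', hbC] using hC.symm
  · rwa [Fin.range_append, span_union, hbC, hcD]
  · intro i hi
    induction i using Fin.addCases with
    | left i => exact absurd hi (by simp)
    | right j => exact Fin.append_right b c j ▸ hDK₁ (hcD ▸ subset_span (mem_range_self j))

theorem opOrder_of_ker_le {E X : Type*} [NormedAddCommGroup E] [NormedSpace ℝ E]
    [NormedAddCommGroup X] [NormedSpace ℝ X] {S U : E →L[ℝ] X}
    [FiniteDimensional ℝ (LinearMap.range (U : E →ₗ[ℝ] X))]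
    (hle : LinearMap.ker (U : E →ₗ[ℝ] X) ≤ LinearMap.ker (S : E →ₗ[ℝ] X)) : OpOrder S U := by
  have := (U : E →ₗ[ℝ] X).quotKerEquivRange.symm.finiteDimensional
  obtain ⟨n, m, hnm, e, he, hS, hU, hSe⟩ := exists_linearIndependent_isCompl_of_le hle
  exact ⟨n, m, hnm, e, he, hS.inf_eq_bot, hS.sup_eq_top, hU.inf_eq_bot, hU.sup_eq_top, hSe⟩

theorem ContinuousLinearMap.exists_ker_eq_of_finiteDimensional {𝕜 E Y X : Type*}
    [NontriviallyNormedField 𝕜] [CompleteSpace 𝕜]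
    [NormedAddCommGroup E] [NormedSpace 𝕜 E] [NormedAddCommGroup Y] [NormedSpace 𝕜 Y]
    [FiniteDimensional 𝕜 Y] [NormedAddCommGroup X] [NormedSpace 𝕜 X]
    (hX : ¬ FiniteDimensional 𝕜 X) (P : E →L[𝕜] Y) :
    ∃ U : E →L[𝕜] X, FiniteDimensional 𝕜 (LinearMap.range (U : E →ₗ[𝕜] X)) ∧
      LinearMap.ker (U : E →ₗ[𝕜] X) = LinearMap.ker (P : E →ₗ[𝕜] Y) := by
  obtain ⟨φ, hφ⟩ : ∃ φ : Y →ₗ[𝕜] X, Function.Injective φ := by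
    refine Module.Free.exists_linearMap_injective_of_lift_rank_lt ?_
    calc Cardinal.lift (Module.rank 𝕜 Y) < Cardinal.aleph0 :=
          Cardinal.lift_lt_aleph0.mpr (Module.rank_lt_aleph0 𝕜 Y)
      _ ≤ Cardinal.lift (Module.rank 𝕜 X) :=
          Cardinal.aleph0_le_lift.mpr (not_lt.mp (mt Module.rank_lt_aleph0_iff.mp hX))
  refine ⟨φ.toContinuousLinearMap ∘L P, ?_, ?_⟩
  · exact finiteDimensional_of_le (LinearMap.range_comp_le_range (P : E →ₗ[𝕜] Y) φ)
  · exact LinearMap.ker_comp_of_ker_eq_bot _ (LinearMap.ker_eq_bot.mpr hφ)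

theorem opOrder_directed_general (E X : Type*)
    [NormedAddCommGroup E] [NormedSpace ℝ E]
    [NormedAddCommGroup X] [NormedSpace ℝ X]
    (hX : ¬ FiniteDimensional ℝ X)
    (S T : E →L[ℝ] X)
    (hS : FiniteDimensional ℝ (LinearMap.range (S : E →ₗ[ℝ] X)))
    (hT : FiniteDimensional ℝ (LinearMap.range (T : E →ₗ[ℝ] X))) :
    ∃ U : E →L[ℝ] X, FiniteDimensional ℝ (LinearMap.range (U : E →ₗ[ℝ] X)) ∧
      OpOrder S U ∧ OpOrder T U := by
  obtain ⟨U, hU, hker⟩ :=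
    (S.rangeRestrict.prod T.rangeRestrict).exists_ker_eq_of_finiteDimensional hX
  rw [ContinuousLinearMap.ker_prod, ContinuousLinearMap.ker_codRestrict,
    ContinuousLinearMap.ker_codRestrict] at hker
  exact ⟨U, hU, opOrder_of_ker_le (hker.trans_le inf_le_left),
    opOrder_of_ker_le (hker.trans_le inf_le_right)⟩

/-- If `X` is infinite-dimensional, the relation `≼` is upward directed on the
finite-rank bounded operators from `E` to `X`. -/
theorem opOrder_directed (E X : Type*)
    [NormedAddCommGroup E] [NormedSpace ℝ E] [CompleteSpace E]
    [NormedAddCommGroup X] [NormedSpace ℝ X] [CompleteSpace X]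
    (hX : ¬ FiniteDimensional ℝ X)
    (S T : E →L[ℝ] X)
    (hS : FiniteDimensional ℝ (LinearMap.range (S : E →ₗ[ℝ] X)))
    (hT : FiniteDimensional ℝ (LinearMap.range (T : E →ₗ[ℝ] X))) :
    ∃ U : E →L[ℝ] X, FiniteDimensional ℝ (LinearMap.range (U : E →ₗ[ℝ] X)) ∧
      OpOrder S U ∧ OpOrder T U :=
  opOrder_directed_general E X hX S T hS hT
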